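/- arXiv:2312.10724 — 6 statements merged into one kernel-verified Lean document; each statement's English description precedes it below -/
import Mathlib

section
/- Let X and Y be topological spaces and f : X → Y a quotient map. If every countably compact subset of C_p(X) has compact closure in C_p(X), then every countably compact subset of C_p(Y) has compact closure in C_p(Y). (In other words, a quotient image of a weakly Grothendieck space is weakly Grothendieck.) -/
open Topology Filter

/-- The space `C_p(X)` of continuous real-valued functions on `X`, carrying the
topology of pointwise convergence (subspace of the product `ℝ^X`). -/
abbrev Cp (X : Type*) [TopologicalSpace X] : Type _ := {f : X → ℝ // Continuous f}

/-- A subset `A` of a space is countably compact (in itself) if every sequence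
in `A` has a cluster point in `A`. -/
def CountablyCompactIn {Z : Type*} [TopologicalSpace Z] (A : Set Z) : Prop :=
  ∀ u : ℕ → Z, (∀ n, u n ∈ A) → ∃ z ∈ A, MapClusterPt z atTop u

/-- A quotient image of a weakly Grothendieck space is weakly Grothendieck: if
every countably compact subset of `C_p(X)` has compact closure, the same holds
for `C_p(Y)` whenever `Y` is a quotient image of `X`. -/
theorem weaklyGrothendieck_of_quotientMap {X Y : Type*} [TopologicalSpace X]
    [TopologicalSpace Y] (f : X → Y) (hf : Topology.IsQuotientMap f)
    (hX : ∀ A : Set (Cp X), CountablyCompactIn A → IsCompact (closure A)) :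
    ∀ A : Set (Cp Y), CountablyCompactIn A → IsCompact (closure A) := by
  -- the precomposition map
  set e : Cp Y → Cp X := fun g => ⟨g.1 ∘ f, g.2.comp hf.continuous⟩ with he
  have hcomp : IsInducing (fun g : Y → ℝ => g ∘ f) := by
    constructor
    rw [Pi.induced_precomp (Y := ℝ) f,
      Function.Surjective.iInf_comp hf.surjective
        (g := fun y => TopologicalSpace.induced (Function.eval y)
          UniformSpace.toTopologicalSpace)]
    rfl
  have hind : IsInducing e := by
    rw [← IsEmbedding.subtypeVal.toIsInducing.of_comp_iff]
    exact hcomp.comp IsEmbedding.subtypeVal.toIsInducing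
  have hinj : Function.Injective e := by
    intro g₁ g₂ h
    have h1 : g₁.1 ∘ f = g₂.1 ∘ f := congrArg Subtype.val h
    ext y
    obtain ⟨x, rfl⟩ := hf.surjective y
    exact congrFun h1 x
  have hrange : IsClosed (Set.range e) := by
    have : Set.range e =
        ⋂ (p : X × X) (_ : f p.1 = f p.2), {h : Cp X | h.1 p.1 = h.1 p.2} := by
      ext h
      simp only [Set.mem_range, Set.mem_iInter, Set.mem_setOf_eq]
      constructor
      · rintro ⟨g, rfl⟩ p hp
        simp only [he, Function.comp_apply, hp]
      · intro hconst
        set g : Y → ℝ := fun y => h.1 (Function.surjInv hf.surjective y) with hg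
        have hgf : g ∘ f = h.1 := by
          funext x
          exact hconst (Function.surjInv hf.surjective (f x), x)
            (Function.surjInv_eq hf.surjective (f x))
        have hgc : Continuous g := by
          rw [hf.continuous_iff]
          rw [show g ∘ f = h.1 from hgf]
          exact h.2
        exact ⟨⟨g, hgc⟩, Subtype.ext hgf⟩
    rw [this]
    refine isClosed_iInter fun p => isClosed_iInter fun _ => ?_
    exact isClosed_eq
      ((continuous_apply p.1).comp continuous_subtype_val)
      ((continuous_apply p.2).comp continuous_subtype_val)
  have hce : IsClosedEmbedding e := ⟨⟨hind, hinj⟩, hrange⟩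
  intro A hA
  have hAimg : CountablyCompactIn (e '' A) := by
    intro u hu
    choose v hvA hv using hu
    obtain ⟨z, hzA, hz⟩ := hA v hvA
    refine ⟨e z, Set.mem_image_of_mem e hzA, ?_⟩
    have := hz.continuousAt_comp (hce.continuous.continuousAt)
    have huv : e ∘ v = u := funext hv
    rwa [huv] at this
  have hK : IsCompact (closure (e '' A)) := hX _ hAimg
  have hsub : closure A ⊆ e ⁻¹' closure (e '' A) := by
    apply closure_minimal
    · intro a ha
      exact subset_closure (Set.mem_image_of_mem e ha)
    · exact IsClosed.preimage hce.continuous isClosed_closure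
  exact (hce.isCompact_preimage hK).of_isClosed_subset isClosed_closure hsub
end

section
/- Let X be an almost discrete space with non-isolated point x₀, and let A ⊆ X be a set not containing x₀ such that every countable subset of A is clopen in X but x₀ lies in the closure of A. Then the characteristic function h of A (h(x) = 1 for x ∈ A, h(x) = 0 otherwise) is discontinuous on X, yet h lies in the closure in ℝ^X of the set F = { f ∈ C(X,ℝ) : there exists a countably infinite S ⊆ A with f = 1 on S and f = 0 on X \ S }. -/
/-!
A continuous indicator of `A` would make `A` closed, contradicting `x₀ ∈ closure A \ A`; for the
same reason `A` is infinite. A basic neighbourhood of the indicator of `A` in `ℝ^X` constrains only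
finitely many coordinates `I`. Adding a countably infinite subset of `A` to the finite set `I ∩ A`
gives a countable `S ⊆ A`, clopen by hypothesis, whose continuous indicator agrees with that of `A`
on `I`.
-/

open Set

theorem Set.isClosed_of_continuous_indicator_const {X M : Type*} [TopologicalSpace X]
    [TopologicalSpace M] [T1Space M] [Zero M] {A : Set X} {c : M} (hc0 : c ≠ 0)
    (hc : Continuous (A.indicator fun _ => c)) : IsClosed A := by
  have hpre : (A.indicator fun _ => c) ⁻¹' {c} = A := by
    ext x; by_cases hx : x ∈ A <;> simp [hx, hc0.symm]
  exact hpre ▸ isClosed_singleton.preimage hc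

theorem mem_closure_pi_of_forall_finset {ι : Type*} {Y : ι → Type*}
    [∀ i, TopologicalSpace (Y i)] {F : Set (∀ i, Y i)} {g : ∀ i, Y i}
    (h : ∀ I : Finset ι, ∃ f ∈ F, ∀ i ∈ I, f i = g i) : g ∈ closure F := by
  refine mem_closure_iff.mpr fun U hU hgU => ?_
  obtain ⟨I, u, hu, hIU⟩ := isOpen_pi_iff.mp hU g hgU
  obtain ⟨f, hfF, hfg⟩ := h I
  exact ⟨f, hIU fun i hi => hfg i hi ▸ (hu i hi).2, hfF⟩

theorem Set.eqOn_indicator_of_inter_subset {α M : Type*} [Zero M] {S A I : Set α} {f : α → M}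
    (hIS : I ∩ A ⊆ S) (hSA : S ⊆ A) : EqOn (S.indicator f) (A.indicator f) I := by
  intro i hi
  by_cases hiA : i ∈ A
  · rw [indicator_of_mem (hIS ⟨hi, hiA⟩), indicator_of_mem hiA]
  · rw [indicator_of_notMem (fun hiS => hiA (hSA hiS)), indicator_of_notMem hiA]

theorem indicator_discontinuous_mem_closure_general {X : Type*} [TopologicalSpace X]
    (x₀ : X)
    (A : Set X) (hx₀A : x₀ ∉ A) (hx₀cl : x₀ ∈ closure A)
    (hclopen : ∀ B ⊆ A, B.Countable → IsClopen B) :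
    ¬ Continuous (A.indicator (fun _ => (1 : ℝ))) ∧
      (A.indicator (fun _ => (1 : ℝ))) ∈
        closure {f : X → ℝ | Continuous f ∧ ∃ S ⊆ A, S.Countable ∧ S.Infinite ∧
          (∀ x ∈ S, f x = 1) ∧ (∀ x ∉ S, f x = 0)} := by
  have hA_not_closed : ¬ IsClosed A := fun h => hx₀A (h.closure_eq ▸ hx₀cl)
  refine ⟨fun hc => hA_not_closed (isClosed_of_continuous_indicator_const one_ne_zero hc), ?_⟩
  have hA_inf : A.Infinite := fun hfin => hA_not_closed (hclopen A subset_rfl hfin.countable).1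
  obtain ⟨T, hTA, hTc, hTi⟩ := hA_inf.exists_subset_countable_infinite
  refine mem_closure_pi_of_forall_finset fun I => ?_
  set S := (↑I ∩ A) ∪ T
  have hSA : S ⊆ A := union_subset inter_subset_right hTA
  have hSc : S.Countable := (I.finite_toSet.inter_of_left A).countable.union hTc
  refine ⟨S.indicator fun _ => 1, ⟨?_, S, hSA, hSc, hTi.mono subset_union_right, ?_, ?_⟩, ?_⟩
  · exact (hclopen S hSA hSc).continuous_indicator continuous_const
  · exact fun x hx => indicator_of_mem hx _
  · exact fun x hx => indicator_of_notMem hx _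
  · exact fun i hi => eqOn_indicator_of_inter_subset subset_union_left hSA hi

/-- Let `X` be almost discrete with non-isolated point `x₀`, and `A ⊆ X` a set
with `x₀ ∉ A`, `x₀ ∈ closure A`, every countable subset of which is clopen.
Then the characteristic function `h` of `A` is discontinuous, yet `h` lies in
the closure in `ℝ^X` of the set `F` of indicator functions of countably
infinite subsets of `A`. -/
theorem indicator_discontinuous_mem_closure {X : Type*} [TopologicalSpace X]
    (x₀ : X) (hni : ¬ IsOpen ({x₀} : Set X))
    (hiso : ∀ x : X, x ≠ x₀ → IsOpen ({x} : Set X))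
    (A : Set X) (hx₀A : x₀ ∉ A) (hx₀cl : x₀ ∈ closure A)
    (hclopen : ∀ B ⊆ A, B.Countable → IsClopen B) :
    ¬ Continuous (A.indicator (fun _ => (1 : ℝ))) ∧
      (A.indicator (fun _ => (1 : ℝ))) ∈
        closure {f : X → ℝ | Continuous f ∧ ∃ S ⊆ A, S.Countable ∧ S.Infinite ∧
          (∀ x ∈ S, f x = 1) ∧ (∀ x ∉ S, f x = 0)} :=
  indicator_discontinuous_mem_closure_general x₀ A hx₀A hx₀cl hclopen
end

section
/- An almost discrete Tychonoff space X is weakly Grothendieck if and only if its tightness is countable, i.e., every countably compact subset of C_p(X) has compact closure in C_p(X) if and only if t(X) = ω. -/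
open Filter Topology

section Aux

variable {X : Type*} [TopologicalSpace X]

/-- A cluster point of a sequence eventually in a closed set lies in that set. -/
lemma mapClusterPt_mem_of_eventually {Y : Type*} [TopologicalSpace Y] {c : Y} {v : ℕ → Y}
    {s : Set Y} (h : MapClusterPt c atTop v) (hs : IsClosed s)
    (hev : ∀ᶠ n in atTop, v n ∈ s) : c ∈ s := by
  have h1 : ClusterPt c (𝓟 s) := h.clusterPt.mono (le_principal_iff.2 hev)
  have := mem_closure_iff_clusterPt.2 h1
  rwa [hs.closure_eq] at this

/-- If every point other than `x₀` is isolated, continuity at `x₀` implies continuity. -/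
lemma continuous_of_continuousAt_pt {x₀ : X} (hiso : ∀ x : X, x ≠ x₀ → IsOpen ({x} : Set X))
    {f : X → ℝ} (h : ContinuousAt f x₀) : Continuous f := by
  rw [continuous_iff_continuousAt]
  intro x
  rcases eq_or_ne x x₀ with heq | hx
  · rwa [heq]
  · have hp : 𝓝 x = pure x := (isOpen_singleton_iff_nhds_eq_pure x).1 (hiso x hx)
    unfold ContinuousAt
    rw [hp]
    exact tendsto_pure_nhds f x

/-- The indicator of a set whose closure misses `x₀` is continuous. -/
lemma indicator_continuous_of_notMem_closure {x₀ : X}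
    (hiso : ∀ x : X, x ≠ x₀ → IsOpen ({x} : Set X)) {S : Set X} (hS : x₀ ∉ closure S) :
    Continuous (S.indicator (fun _ => (1 : ℝ))) := by
  apply continuous_of_continuousAt_pt hiso
  have hx₀S : x₀ ∉ S := fun h => hS (subset_closure h)
  have h0 : S.indicator (fun _ => (1 : ℝ)) x₀ = 0 := Set.indicator_of_notMem hx₀S _
  have hev : ∀ᶠ x in 𝓝 x₀, S.indicator (fun _ => (1 : ℝ)) x = 0 := by
    filter_upwards [isClosed_closure.isOpen_compl.mem_nhds hS] with x hx
    exact Set.indicator_of_notMem (fun h => hx (subset_closure h)) _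
  have ht : Filter.Tendsto (S.indicator (fun _ => (1 : ℝ))) (𝓝 x₀) (𝓝 0) :=
    Filter.Tendsto.congr' (by filter_upwards [hev] with x hx using hx.symm) tendsto_const_nhds
  unfold ContinuousAt
  rwa [h0]

/-- A countably compact subset of `Cp X` is pointwise bounded. -/
lemma countablyCompact_pointwise_bdd {A : Set (Cp X)} (hA : CountablyCompactIn A) (x : X) :
    ∃ M : ℝ, ∀ f ∈ A, |f.1 x| ≤ M := by
  by_contra hcon
  push_neg at hcon
  choose u huA hu using fun n : ℕ => hcon n
  obtain ⟨z, hzA, hz⟩ := hA u huA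
  have hev : ContinuousAt (fun f : Cp X => f.1 x) z :=
    ((continuous_apply x).comp continuous_subtype_val).continuousAt
  have hcl : MapClusterPt (z.1 x) atTop ((fun f : Cp X => f.1 x) ∘ u) :=
    hz.continuousAt_comp hev
  have hfreq : ∃ᶠ n in atTop, ((fun f : Cp X => f.1 x) ∘ u) n ∈ Metric.ball (z.1 x) 1 :=
    mapClusterPt_iff_frequently.1 hcl _ (Metric.ball_mem_nhds _ one_pos)
  have hevn : ∀ᶠ n : ℕ in atTop, (|z.1 x| + 1 : ℝ) ≤ n := by
    obtain ⟨N, hN⟩ := exists_nat_ge (|z.1 x| + 1)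
    filter_upwards [eventually_ge_atTop N] with n hn
    exact hN.trans (Nat.cast_le.2 hn)
  obtain ⟨n, hn1, hn2⟩ := (hfreq.and_eventually hevn).exists
  have h1 : |(u n).1 x - z.1 x| < 1 := by
    simpa [Real.dist_eq] using hn1
  have h2 : (n : ℝ) < |(u n).1 x| := hu n
  have : |(u n).1 x| ≤ |z.1 x| + 1 := by
    calc |(u n).1 x| = |(u n).1 x - z.1 x + z.1 x| := by ring_nf
      _ ≤ |(u n).1 x - z.1 x| + |z.1 x| := abs_add_le _ _
      _ ≤ |z.1 x| + 1 := by linarith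
  linarith

end Aux

/-- An almost discrete Tychonoff space is weakly Grothendieck iff its tightness
is countable. -/
theorem almostDiscrete_weaklyGrothendieck_iff_tightness {X : Type*} [TopologicalSpace X]
    [T35Space X] (x₀ : X)
    (hni : ¬ IsOpen ({x₀} : Set X))
    (hiso : ∀ x : X, x ≠ x₀ → IsOpen ({x} : Set X)) :
    (∀ A : Set (Cp X), CountablyCompactIn A → IsCompact (closure A)) ↔
      (∀ (A : Set X) (x : X), x ∈ closure A →
        ∃ B ⊆ A, B.Countable ∧ x ∈ closure B) := by
  classical
  constructor
  · -- weakly Grothendieck → countable tightness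
    intro hG A x hx
    rcases eq_or_ne x x₀ with heq | hxx
    · -- the hard case: x = x₀
      obtain rfl : x₀ = x := heq.symm
      clear heq
      by_contra hcon
      push_neg at hcon
      have hx₀A : x₀ ∉ A := by
        intro h
        exact (hcon {x₀} (Set.singleton_subset_iff.2 h) (Set.countable_singleton _))
          (subset_closure rfl)
      have hScl : ∀ S ⊆ A, S.Countable → x₀ ∉ closure S := fun S hS hc => hcon S hS hc
      -- the countably compact family of indicators of countable subsets of A
      set 𝒜 : Set (Cp X) :=
        {f | ∃ S : Set X, S ⊆ A ∧ S.Countable ∧ f.1 = S.indicator (fun _ => (1 : ℝ))} with h𝒜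
      have hcc : CountablyCompactIn 𝒜 := by
        intro u hu
        choose S hSA hScnt hSeq using hu
        -- the sequence lives in the compact set {0,1}^X
        have hP : IsCompact (Set.pi Set.univ (fun _ : X => ({0, 1} : Set ℝ))) :=
          isCompact_univ_pi (fun _ => (Set.toFinite _).isCompact)
        have hmem : ∀ n, (Subtype.val ∘ u) n ∈ Set.pi Set.univ (fun _ : X => ({0, 1} : Set ℝ)) := by
          intro n x _
          simp only [Function.comp_apply]
          rw [hSeq n]
          by_cases hxS : x ∈ S n
          · simp [Set.indicator_of_mem hxS]
          · simp [Set.indicator_of_notMem hxS]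
        have hle : map (Subtype.val ∘ u) atTop ≤
            𝓟 (Set.pi Set.univ (fun _ : X => ({0, 1} : Set ℝ))) := by
          rw [le_principal_iff, mem_map]
          exact Filter.univ_mem' hmem
        obtain ⟨g, hgP, hgcl⟩ := hP.exists_clusterPt hle
        -- g is the indicator of W
        set W : Set X := {x | g x = 1} with hW
        have hWsub : W ⊆ ⋃ n, S n := by
          intro x hxW
          by_contra hxU
          have hx0 : ∀ n, (Subtype.val ∘ u) n x = 0 := by
            intro n
            simp only [Function.comp_apply]
            rw [hSeq n]
            exact Set.indicator_of_notMem (fun h => hxU (Set.mem_iUnion.2 ⟨n, h⟩)) _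
          have hclx : MapClusterPt (g x) atTop (fun n => (Subtype.val ∘ u) n x) :=
            MapClusterPt.continuousAt_comp (continuous_apply x).continuousAt hgcl
          have hg0 : g x ∈ ({0} : Set ℝ) := by
            apply mapClusterPt_mem_of_eventually hclx isClosed_singleton
            filter_upwards with n using by simp [hx0 n]
          simp only [Set.mem_singleton_iff] at hg0
          rw [hW] at hxW
          simp only [Set.mem_setOf_eq] at hxW
          rw [hxW] at hg0
          norm_num at hg0
        have hgeq : g = W.indicator (fun _ => (1 : ℝ)) := by
          funext y
          by_cases hyW : y ∈ W
          · rw [Set.indicator_of_mem hyW]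
            exact hyW
          · rw [Set.indicator_of_notMem hyW]
            rcases hgP y (Set.mem_univ y) with h | h
            · exact h
            · exact absurd h hyW
        have hWA : W ⊆ A := hWsub.trans (Set.iUnion_subset hSA)
        have hWcnt : W.Countable := (Set.countable_iUnion hScnt).mono hWsub
        have hgc : Continuous g := by
          rw [hgeq]
          exact indicator_continuous_of_notMem_closure hiso (hScl W hWA hWcnt)
        refine ⟨⟨g, hgc⟩, ⟨W, hWA, hWcnt, hgeq⟩, ?_⟩
        have h1 : MapClusterPt g (map u atTop) (Subtype.val : Cp X → X → ℝ) :=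
          mapClusterPt_comp.1 hgcl
        exact Topology.IsInducing.subtypeVal.mapClusterPt_iff.1 h1
      -- now derive a contradiction from compactness of closure 𝒜
      have hK := hG 𝒜 hcc
      set C : Set (X → ℝ) := Subtype.val '' closure 𝒜 with hC
      have hCc : IsCompact C := hK.image continuous_subtype_val
      have hCcl : IsClosed C := hCc.isClosed
      set fA : X → ℝ := A.indicator (fun _ => (1 : ℝ)) with hfA
      have hfAmem : fA ∈ closure (Subtype.val '' 𝒜) := by
        refine mem_closure_of_tendsto (f := fun F : Finset X =>
          ((F : Set X) ∩ A).indicator (fun _ => (1 : ℝ))) (b := atTop) ?_ ?_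
        · rw [tendsto_pi_nhds]
          intro y
          refine Filter.Tendsto.congr' (f₁ := fun _ : Finset X => fA y) ?_ tendsto_const_nhds
          filter_upwards [eventually_ge_atTop {y}] with F hF
          by_cases hyA : y ∈ A
          · have hyF : y ∈ (↑F : Set X) ∩ A :=
              ⟨Finset.mem_coe.2 (hF (Finset.mem_singleton_self y)), hyA⟩
            rw [hfA, Set.indicator_of_mem hyA, Set.indicator_of_mem hyF]
          · rw [hfA, Set.indicator_of_notMem hyA,
              Set.indicator_of_notMem (fun h => hyA h.2)]
        · filter_upwards with F
          have hsub : (F : Set X) ∩ A ⊆ A := Set.inter_subset_right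
          have hcnt : ((F : Set X) ∩ A).Countable := (F.finite_toSet.inter_of_left A).countable
          exact ⟨⟨_, indicator_continuous_of_notMem_closure hiso (hScl _ hsub hcnt)⟩,
            ⟨_, hsub, hcnt, rfl⟩, rfl⟩
      have hsub : closure (Subtype.val '' 𝒜) ⊆ C :=
        closure_minimal (Set.image_mono subset_closure) hCcl
      obtain ⟨h, _, hh⟩ := hsub hfAmem
      -- fA is continuous, contradiction with x₀ ∈ closure A
      have hfAc : Continuous fA := hh ▸ h.2
      have h0 : fA x₀ = 0 := Set.indicator_of_notMem hx₀A _
      have hCA := hfAc.continuousAt (x := x₀)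
      rw [ContinuousAt, h0, Metric.tendsto_nhds] at hCA
      obtain ⟨y, hy1, hy2⟩ :=
        mem_closure_iff_nhds.1 hx _ (Filter.eventually_iff.1 (hCA 1 one_pos))
      simp only [Set.mem_setOf_eq] at hy1
      rw [hfA, Set.indicator_of_mem hy2] at hy1
      norm_num at hy1
    · -- x ≠ x₀ : x isolated, hence x ∈ A
      have hxA : x ∈ A := by
        obtain ⟨y, hy1, hy2⟩ := mem_closure_iff.1 hx {x} (hiso x hxx) rfl
        rwa [← hy1]
      exact ⟨{x}, Set.singleton_subset_iff.2 hxA, Set.countable_singleton x,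
        subset_closure rfl⟩
  · -- countable tightness → weakly Grothendieck
    intro hT A hA
    choose M hM using fun x => countablyCompact_pointwise_bdd hA x
    set A' : Set (X → ℝ) := Subtype.val '' A with hA'
    have hKc : IsCompact (closure A') := by
      refine IsCompact.of_isClosed_subset
        (isCompact_univ_pi (fun x => isCompact_Icc (a := -(M x)) (b := M x)))
        isClosed_closure ?_
      refine closure_minimal ?_ (isClosed_set_pi (fun x _ => isClosed_Icc))
      rintro _ ⟨f, hf, rfl⟩ x _
      exact abs_le.1 (hM x f hf)
    -- every pointwise limit of A is continuous
    have hcont : ∀ g ∈ closure A', Continuous g := by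
      intro g hg
      apply continuous_of_continuousAt_pt hiso
      rw [ContinuousAt, Metric.tendsto_nhds]
      intro ε hε
      by_contra hcon
      -- x₀ is in the closure of the bad set S
      set S : Set X := {x | ¬ dist (g x) (g x₀) < ε} with hS
      have hx₀S : x₀ ∈ closure S := by
        rw [mem_closure_iff_nhds]
        intro t ht
        rcases Set.eq_empty_or_nonempty (t ∩ S) with he | hne
        · exfalso
          apply hcon
          filter_upwards [ht] with y hy
          by_contra hyd
          exact Set.eq_empty_iff_forall_notMem.1 he y ⟨hy, hyd⟩
        · exact hne
      obtain ⟨B, hBS, hBcnt, hx₀B⟩ := hT S x₀ hx₀S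
      have hBne : B.Nonempty := by
        rcases Set.eq_empty_or_nonempty B with rfl | hne
        · rw [closure_empty] at hx₀B; exact absurd hx₀B (Set.notMem_empty x₀)
        · exact hne
      obtain ⟨b, hb⟩ := Set.Countable.exists_eq_range hBcnt hBne
      -- choose approximating functions from A on finite sets
      have hex : ∀ n : ℕ, ∃ f ∈ A,
          ∀ y ∈ insert x₀ ((Finset.Iic n).image b), dist (f.1 y) (g y) < ε / 4 := by
        intro n
        set F : Finset X := insert x₀ ((Finset.Iic n).image b) with hF
        set U : Set (X → ℝ) := ⋂ y ∈ F, (fun h : X → ℝ => h y) ⁻¹' Metric.ball (g y) (ε / 4)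
          with hU
        have hUopen : IsOpen U :=
          isOpen_biInter_finset (fun y _ => (continuous_apply y).isOpen_preimage _
            Metric.isOpen_ball)
        have hε4 : (0 : ℝ) < ε / 4 := by positivity
        have hgU : g ∈ U := by
          rw [hU]
          refine Set.mem_iInter₂.2 (fun y _ => ?_)
          simp [Metric.mem_ball, dist_self, hε4]
        obtain ⟨w, hwU, f, hfA, rfl⟩ := mem_closure_iff.1 hg U hUopen hgU
        refine ⟨f, hfA, fun y hy => ?_⟩
        have := Set.mem_iInter₂.1 hwU y hy
        simpa [Metric.mem_ball] using this
      choose f hfA hff using hex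
      obtain ⟨h, hhA, hhcl⟩ := hA f hfA
      -- the cluster point h satisfies dist (h y) (g y) ≤ ε/4 on {x₀} ∪ B
      have hclose : ∀ y : X, (∀ᶠ n in atTop, y ∈ insert x₀ ((Finset.Iic n).image b)) →
          dist (h.1 y) (g y) ≤ ε / 4 := by
        intro y hy
        have hevc : ContinuousAt (fun f : Cp X => f.1 y) h :=
          ((continuous_apply y).comp continuous_subtype_val).continuousAt
        have hcl : MapClusterPt (h.1 y) atTop ((fun f : Cp X => f.1 y) ∘ f) :=
          hhcl.continuousAt_comp hevc
        have hmem : h.1 y ∈ Metric.closedBall (g y) (ε / 4) := by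
          apply mapClusterPt_mem_of_eventually hcl Metric.isClosed_closedBall
          filter_upwards [hy] with n hn
          exact Metric.mem_closedBall.2 (le_of_lt (hff n y hn))
        simpa [Metric.mem_closedBall] using hmem
      have hx₀close : dist (h.1 x₀) (g x₀) ≤ ε / 4 :=
        hclose x₀ (Filter.Eventually.of_forall (fun n => Finset.mem_insert_self _ _))
      have hbclose : ∀ k : ℕ, dist (h.1 (b k)) (g (b k)) ≤ ε / 4 := by
        intro k
        apply hclose
        filter_upwards [eventually_ge_atTop k] with n hn
        exact Finset.mem_insert_of_mem (Finset.mem_image.2 ⟨k, Finset.mem_Iic.2 hn, rfl⟩)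
      -- h is continuous at x₀, so it is small on some neighborhood, meeting B
      have hhx₀ : ∀ᶠ y in 𝓝 x₀, dist (h.1 y) (h.1 x₀) < ε / 4 := by
        have hc := h.2.continuousAt (x := x₀)
        rw [ContinuousAt, Metric.tendsto_nhds] at hc
        exact hc _ (by positivity)
      obtain ⟨y, hy1, hy2⟩ := mem_closure_iff_nhds.1 hx₀B _ (Filter.eventually_iff.1 hhx₀)
      simp only [Set.mem_setOf_eq] at hy1
      rw [hb] at hy2
      obtain ⟨k, rfl⟩ := hy2
      have hbS : b k ∈ S := hBS (hb ▸ Set.mem_range_self k)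
      rw [hS] at hbS
      simp only [Set.mem_setOf_eq, not_lt] at hbS
      have htri : dist (g (b k)) (g x₀) ≤ dist (g (b k)) (h.1 (b k)) + dist (h.1 (b k)) (h.1 x₀)
          + dist (h.1 x₀) (g x₀) := dist_triangle4 _ _ _ _
      have e1 : dist (g (b k)) (h.1 (b k)) = dist (h.1 (b k)) (g (b k)) := dist_comm _ _
      linarith [hbclose k]
    -- conclude compactness in Cp X
    have hsub : closure A' ⊆ Set.range (Subtype.val : Cp X → X → ℝ) :=
      fun g hg => ⟨⟨g, hcont g hg⟩, rfl⟩
    have hclA : closure A = Subtype.val ⁻¹' (closure A') :=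
      Topology.IsEmbedding.subtypeVal.closure_eq_preimage_closure_image A
    rw [Topology.IsEmbedding.subtypeVal.isCompact_iff, hclA,
      Set.image_preimage_eq_of_subset hsub]
    exact hKc
end

section
/- Let X = ∏_{i∈ℕ} Xᵢ be a countable product of topological spaces. If every finite subproduct X_{i₁} × ⋯ × X_{i_k} has countable tightness and each Xᵢ is almost discrete (has exactly one non-isolated point), then X has countable tightness. -/
/-!
Let `z ∈ closure A`. For each finite set `s` of coordinates, countable tightness of the subproduct
over `s` gives a countable `C s ⊆ A` whose projection to `s` has the projection of `z` in its
closure. A basic neighbourhood of `z` constrains only finitely many coordinates, so `z` lies in the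
closure of the countable union of all the `C s`.
-/

/-- A space `α` has countable tightness. -/
def CountableTightness (α : Type*) [TopologicalSpace α] : Prop :=
  ∀ (A : Set α) (x : α), x ∈ closure A → ∃ B ⊆ A, B.Countable ∧ x ∈ closure B

open Set

theorem CountableTightness.exists_countable_subset_mem_closure_image {α β : Type*}
    [TopologicalSpace β] (hβ : CountableTightness β) (f : α → β) {A : Set α} {b : β}
    (hb : b ∈ closure (f '' A)) : ∃ C ⊆ A, C.Countable ∧ b ∈ closure (f '' C) := by
  obtain ⟨B, hBA, hBc, hbB⟩ := hβ _ b hb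
  choose g hgA hfg using fun y : B => hBA y.2
  have : Countable B := hBc.to_subtype
  refine ⟨range g, range_subset_iff.2 hgA, countable_range g, closure_mono ?_ hbB⟩
  exact fun y hy => ⟨g ⟨y, hy⟩, mem_range_self _, hfg _⟩

theorem mem_closure_iff_forall_finset_restrict {ι : Type*} {X : ι → Type*}
    [∀ i, TopologicalSpace (X i)] {S : Set (∀ i, X i)} {z : ∀ i, X i} :
    z ∈ closure S ↔ ∀ s : Finset ι, s.restrict z ∈ closure (s.restrict '' S) := by
  refine ⟨fun hz s => image_closure_subset_closure_image (Finset.continuous_restrict s)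
    ⟨z, hz, rfl⟩, fun h => mem_closure_iff.2 fun o ho hzo => ?_⟩
  obtain ⟨I, u, hu, hIu⟩ := isOpen_pi_iff.1 ho z hzo
  have hV : IsOpen (univ.pi fun i : I => u i) :=
    isOpen_set_pi finite_univ fun i _ => (hu i i.2).1
  obtain ⟨_, hcu, c, hcS, rfl⟩ :=
    mem_closure_iff.1 (h I) _ hV fun i _ => (hu i i.2).2
  exact ⟨c, hIu fun i hi => hcu ⟨i, hi⟩ (mem_univ _), hcS⟩

theorem countableTightness_pi_of_forall_finset {ι : Type*} [Countable ι] {X : ι → Type*}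
    [∀ i, TopologicalSpace (X i)] (h : ∀ s : Finset ι, CountableTightness (∀ i : s, X i)) :
    CountableTightness (∀ i, X i) := by
  intro A z hz
  choose C hCA hCc hzC using fun s => (h s).exists_countable_subset_mem_closure_image _
    (mem_closure_iff_forall_finset_restrict.1 hz s)
  refine ⟨⋃ s, C s, iUnion_subset hCA, countable_iUnion hCc,
    mem_closure_iff_forall_finset_restrict.2 fun s => ?_⟩
  exact closure_mono (image_mono (subset_iUnion C s)) (hzC s)

theorem countableTightness_of_finite_subproducts_general {X : ℕ → Type*}
    [∀ i, TopologicalSpace (X i)]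
    (hfin : ∀ s : Finset ℕ, CountableTightness (∀ i : s, X i)) :
    CountableTightness (∀ i, X i) :=
  countableTightness_pi_of_forall_finset hfin

/-- If `X = ∏_{i ∈ ℕ} X i` is a countable product of almost discrete spaces and
every finite subproduct has countable tightness, then `X` has countable
tightness. -/
theorem countableTightness_of_finite_subproducts {X : ℕ → Type*}
    [∀ i, TopologicalSpace (X i)] (x : ∀ i, X i)
    (hni : ∀ i, ¬ IsOpen ({x i} : Set (X i)))
    (hiso : ∀ i, ∀ y : X i, y ≠ x i → IsOpen ({y} : Set (X i)))
    (hfin : ∀ s : Finset ℕ, CountableTightness (∀ i : s, X i)) :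
    CountableTightness (∀ i, X i) :=
  countableTightness_of_finite_subproducts_general hfin
end

section
/- The countable power (L(τ))^ω of the one-point Lindelöfication of a discrete space of cardinality τ is Lindelöf. -/
/-- The one-point Lindelöfication `L(τ) = D ∪ {ξ}` of a discrete set `D`:
the extra point is `none`, points of `D` are isolated, and neighborhoods of
`none` are exactly the sets containing it with countable complement. -/
def OnePointLind (D : Type*) : Type _ := Option D

instance (D : Type*) : TopologicalSpace (OnePointLind D) where
  IsOpen s := (none : Option D) ∈ s → Set.Countable {d : D | some d ∉ s}
  isOpen_univ := fun _ => by
    have : {d : D | some d ∉ (Set.univ : Set (OnePointLind D))} = ∅ := by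
      ext d; simp [Set.mem_univ]; exact trivial
    rw [this]; exact Set.countable_empty
  isOpen_inter := fun s t hs ht hn => by
    have : {d : D | some d ∉ s ∩ t} = {d : D | some d ∉ s} ∪ {d : D | some d ∉ t} := by
      ext d
      simp only [Set.mem_setOf_eq, Set.mem_union, Set.mem_inter_iff]
      exact not_and_or
    rw [this]; exact (hs hn.1).union (ht hn.2)
  isOpen_sUnion := fun S hS hn => by
    obtain ⟨s, hsS, hns⟩ := hn
    exact Set.Countable.mono
      (fun d hd => fun h : (some d : Option D) ∈ s => hd ⟨s, hsS, h⟩) (hS s hsS hns)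

noncomputable section
namespace OPLaux
open Classical Set Ordinal Cardinal

def w1 : Ordinal.{0} := (Cardinal.aleph 1).ord
theorem w1_limit : Order.IsSuccLimit w1 := Cardinal.isSuccLimit_ord (Cardinal.aleph0_le_aleph 1)
theorem w1_pos : 0 < w1 := w1_limit.pos
theorem succ_lt_w1 {o : Ordinal.{0}} (h : o < w1) : o + 1 < w1 := by
  rw [Ordinal.add_one_eq_succ]; exact w1_limit.succ_lt h
theorem iSup_lt_w1 {f : ℕ → Ordinal.{0}} (hf : ∀ n, f n < w1) : (⨆ n, f n) < w1 := by
  apply Ordinal.iSup_lt_ord _ hf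
  rw [w1, Cardinal.isRegular_aleph_one.cof_eq, Cardinal.mk_nat]
  exact Cardinal.aleph0_lt_aleph_one
theorem countable_Iio_w1 {o : Ordinal.{0}} (h : o < w1) : (Set.Iio o).Countable := by
  rw [Cardinal.countable_iff_lt_aleph_one, Ordinal.mk_Iio_ordinal]
  have h1 : o.card < Cardinal.aleph 1 := Cardinal.lt_ord.1 h
  calc Cardinal.lift.{1} o.card < Cardinal.lift.{1} (Cardinal.aleph 1) := Cardinal.lift_lt.2 h1
    _ = Cardinal.aleph 1 := by rw [Cardinal.lift_aleph, Ordinal.lift_one]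

/-- Clubs in ω₁. -/
def Club (C : Set Ordinal.{0}) : Prop :=
  (∀ a < w1, ∃ b ∈ C, a < b) ∧
  (∀ o : Ordinal.{0}, 0 < o → o < w1 → (∀ a < o, ∃ b ∈ C, a < b ∧ b < o) → o ∈ C) ∧
  (∀ c ∈ C, c < w1)

def Stat (S : Set Ordinal.{0}) : Prop := ∀ C, Club C → (S ∩ C).Nonempty

/-- A choice of an element of `C` above `a`. -/
def nxt (C : Set Ordinal.{0}) (a : Ordinal.{0}) : Ordinal.{0} :=
  if h : ∃ b ∈ C, a < b then h.choose else 0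

theorem nxt_spec {C : Set Ordinal.{0}} (hC : Club C) {a : Ordinal.{0}} (ha : a < w1) :
    nxt C a ∈ C ∧ a < nxt C a ∧ nxt C a < w1 := by
  have h : ∃ b ∈ C, a < b := hC.1 a ha
  rw [nxt, dif_pos h]
  exact ⟨h.choose_spec.1, h.choose_spec.2, hC.2.2 _ h.choose_spec.1⟩

theorem club_Ioi {a : Ordinal.{0}} (ha : a < w1) : Club {b | a < b ∧ b < w1} := by
  refine ⟨fun c hc => ?_, fun o h0 ho happ => ?_, fun c hc => hc.2⟩
  · refine ⟨max a c + 1, ⟨?_, ?_⟩, ?_⟩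
    · exact lt_of_le_of_lt (le_max_left a c) (lt_add_one _)
    · exact succ_lt_w1 (max_lt ha hc)
    · exact lt_of_le_of_lt (le_max_right a c) (lt_add_one _)
  · obtain ⟨b, hb, _, hbo⟩ := happ 0 h0
    exact ⟨lt_trans hb.1 hbo, ho⟩

theorem club_Iio : Club (Set.Iio w1) := by
  refine ⟨fun c hc => ⟨c + 1, succ_lt_w1 hc, lt_add_one _⟩, fun o _ ho _ => ho, fun c hc => hc⟩

theorem Stat.nonempty {S : Set Ordinal.{0}} (hS : Stat S) : ∃ o ∈ S, o < w1 := by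
  obtain ⟨o, hoS, hoC⟩ := hS _ club_Iio
  exact ⟨o, hoS, hoC⟩

theorem Stat.unbounded {S : Set Ordinal.{0}} (hS : Stat S) {a : Ordinal.{0}} (ha : a < w1) :
    ∃ o ∈ S, a < o ∧ o < w1 := by
  obtain ⟨o, hoS, hoC⟩ := hS _ (club_Ioi ha)
  exact ⟨o, hoS, hoC.1, hoC.2⟩

theorem Stat.mono {S T : Set Ordinal.{0}} (h : S ⊆ T) (hS : Stat S) : Stat T :=
  fun C hC => (hS C hC).imp (fun o ho => ⟨h ho.1, ho.2⟩)

theorem Club.inter {C C' : Set Ordinal.{0}} (hC : Club C) (hC' : Club C') : Club (C ∩ C') := by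
  constructor
  · -- unbounded
    intro a ha
    set g : ℕ → Ordinal.{0} := fun n => Nat.rec a (fun _ ih => nxt C' (nxt C ih)) n with hg
    have hg0 : g 0 = a := rfl
    have hgs : ∀ n, g (n + 1) = nxt C' (nxt C (g n)) := fun n => rfl
    have hlt : ∀ n, g n < w1 := by
      intro n
      induction n with
      | zero => exact ha
      | succ n ih =>
        rw [hgs]
        exact (nxt_spec hC' ((nxt_spec hC ih).2.2)).2.2
    have hmono : ∀ n, g n < g (n + 1) := by
      intro n
      rw [hgs]
      exact lt_trans (nxt_spec hC (hlt n)).2.1 (nxt_spec hC' ((nxt_spec hC (hlt n)).2.2)).2.1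
    set β : Ordinal.{0} := ⨆ n, g n with hβ
    have hβlt : β < w1 := iSup_lt_w1 hlt
    have hle : ∀ n, g n ≤ β := fun n => Ordinal.le_iSup g n
    have hltβ : ∀ n, g n < β := fun n => lt_of_lt_of_le (hmono n) (hle (n + 1))
    have haβ : a < β := hg0 ▸ hltβ 0
    have h0β : (0 : Ordinal) < β := lt_of_le_of_lt (zero_le : (0 : Ordinal) ≤ a) haβ
    have happrox : ∀ a' < β, ∃ n, a' < g n := fun a' ha' => Ordinal.lt_iSup_iff.1 ha'
    have hβC : β ∈ C := by
      refine hC.2.1 β h0β hβlt (fun a' ha' => ?_)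
      obtain ⟨n, hn⟩ := happrox a' ha'
      refine ⟨nxt C (g n), (nxt_spec hC (hlt n)).1, lt_trans hn (nxt_spec hC (hlt n)).2.1, ?_⟩
      calc nxt C (g n) < g (n + 1) := by
            rw [hgs]; exact (nxt_spec hC' ((nxt_spec hC (hlt n)).2.2)).2.1
        _ ≤ β := hle (n + 1)
    have hβC' : β ∈ C' := by
      refine hC'.2.1 β h0β hβlt (fun a' ha' => ?_)
      obtain ⟨n, hn⟩ := happrox a' ha'
      refine ⟨g (n + 1), ?_, ?_, hltβ (n + 1)⟩
      · rw [hgs]; exact (nxt_spec hC' ((nxt_spec hC (hlt n)).2.2)).1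
      · exact lt_trans hn (hmono n)
    exact ⟨β, ⟨hβC, hβC'⟩, haβ⟩
  constructor
  · -- closed
    intro o h0 ho happ
    constructor
    · refine hC.2.1 o h0 ho (fun a ha => ?_)
      obtain ⟨b, hb, hab, hbo⟩ := happ a ha
      exact ⟨b, hb.1, hab, hbo⟩
    · refine hC'.2.1 o h0 ho (fun a ha => ?_)
      obtain ⟨b, hb, hab, hbo⟩ := happ a ha
      exact ⟨b, hb.2, hab, hbo⟩
  · exact fun c hc => hC.2.2 c hc.1

theorem stat_split {S S1 : Set Ordinal.{0}} (hS : Stat S) (h1 : ¬ Stat S1) :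
    Stat (S \ S1) := by
  rw [Stat] at h1; push_neg at h1
  obtain ⟨C1, hC1, hdisj⟩ := h1
  intro C hC
  obtain ⟨o, hoS, hoC1, hoC⟩ := hS _ (Club.inter hC1 hC)
  refine ⟨o, ⟨hoS, fun hoS1 => ?_⟩, hoC⟩
  have h2 : o ∈ S1 ∩ C1 := ⟨hoS1, hoC1⟩
  rw [hdisj] at h2
  exact h2

end OPLaux

namespace OPLaux
open Classical Set Ordinal Cardinal

def enumIio (b : Ordinal.{0}) : ℕ → Ordinal.{0} :=
  if h : 0 < b ∧ b < w1 then Set.enumerateCountable (countable_Iio_w1 h.2) 0 else fun _ => 0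

theorem enumIio_lt {b : Ordinal.{0}} (h0 : 0 < b) (hb : b < w1) (m : ℕ) : enumIio b m < b := by
  rw [enumIio, dif_pos ⟨h0, hb⟩]
  exact Set.enumerateCountable_mem (countable_Iio_w1 hb) h0 m

theorem enumIio_surj {b : Ordinal.{0}} (h0 : 0 < b) (hb : b < w1) {γ : Ordinal.{0}} (hγ : γ < b) :
    ∃ m, enumIio b m = γ := by
  rw [enumIio, dif_pos ⟨h0, hb⟩]
  obtain ⟨m, hm⟩ := Set.subset_range_enumerate (countable_Iio_w1 hb) 0 hγ
  exact ⟨m, hm⟩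

def diagInt (Cs : Ordinal.{0} → Set Ordinal.{0}) : Set Ordinal.{0} :=
  {α | α < w1 ∧ ∀ γ < α, α ∈ Cs γ}

theorem club_diagInt {Cs : Ordinal.{0} → Set Ordinal.{0}} (h : ∀ γ, Club (Cs γ)) :
    Club (diagInt Cs) := by
  refine ⟨?_, ?_, fun c hc => hc.1⟩
  · -- unbounded
    intro a ha
    set g : ℕ → Ordinal.{0} := fun n =>
      Nat.rec (a + 1) (fun n ih => (⨆ m, nxt (Cs (enumIio ih m)) ih) + 1) n with hgdef
    have hg0 : g 0 = a + 1 := rfl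
    have hgs : ∀ n, g (n + 1) = (⨆ m, nxt (Cs (enumIio (g n) m)) (g n)) + 1 := fun n => rfl
    have hpos : ∀ n, 0 < g n := by
      intro n
      cases n with
      | zero => exact lt_of_le_of_lt (zero_le : (0 : Ordinal) ≤ a) (lt_add_one a)
      | succ n => rw [hgs]; exact lt_of_le_of_lt zero_le (lt_add_one _)
    have hlt : ∀ n, g n < w1 := by
      intro n
      induction n with
      | zero => exact succ_lt_w1 ha
      | succ n ih =>
        rw [hgs]
        refine succ_lt_w1 (iSup_lt_w1 (fun m => ?_))
        exact (nxt_spec (h _) ih).2.2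
    have hmono : ∀ n, g n < g (n + 1) := by
      intro n
      rw [hgs]
      refine lt_of_lt_of_le (lt_of_lt_of_le ((nxt_spec (h (enumIio (g n) 0)) (hlt n)).2.1) ?_) (le_of_lt (lt_add_one _))
      exact Ordinal.le_iSup (fun m => nxt (Cs (enumIio (g n) m)) (g n)) 0
    have hmono' : Monotone g := monotone_nat_of_le_succ (fun n => le_of_lt (hmono n))
    set β : Ordinal.{0} := ⨆ n, g n with hβ
    have hβlt : β < w1 := iSup_lt_w1 hlt
    have hle : ∀ n, g n ≤ β := fun n => Ordinal.le_iSup g n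
    have hltβ : ∀ n, g n < β := fun n => lt_of_lt_of_le (hmono n) (hle (n + 1))
    have haβ : a < β := lt_of_lt_of_le (lt_add_one a) (hg0 ▸ hle 0)
    refine ⟨β, ⟨hβlt, fun γ hγ => ?_⟩, haβ⟩
    -- β ∈ Cs γ for γ < β
    have hγw1 : γ < w1 := lt_trans hγ hβlt
    refine (h γ).2.1 β (lt_of_le_of_lt (zero_le : (0 : Ordinal) ≤ γ) hγ) hβlt (fun a' ha' => ?_)
    obtain ⟨n1, hn1⟩ := Ordinal.lt_iSup_iff.1 ha'
    obtain ⟨n2, hn2⟩ := Ordinal.lt_iSup_iff.1 hγ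
    set n := max n1 n2 with hn
    have ha'n : a' < g n := lt_of_lt_of_le hn1 (hmono' (le_max_left n1 n2))
    have hγn : γ < g n := lt_of_lt_of_le hn2 (hmono' (le_max_right n1 n2))
    obtain ⟨m, hm⟩ := enumIio_surj (hpos n) (hlt n) hγn
    refine ⟨nxt (Cs γ) (g n), (nxt_spec (h γ) (hlt n)).1,
      lt_trans ha'n (nxt_spec (h γ) (hlt n)).2.1, ?_⟩
    calc nxt (Cs γ) (g n) ≤ ⨆ m', nxt (Cs (enumIio (g n) m')) (g n) := by
          rw [← hm]
          exact Ordinal.le_iSup (fun m' => nxt (Cs (enumIio (g n) m')) (g n)) m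
      _ < g (n + 1) := by rw [hgs]; exact lt_add_one _
      _ ≤ β := hle (n + 1)
  · -- closed
    intro o h0 ho happ
    refine ⟨ho, fun γ hγ => ?_⟩
    refine (h γ).2.1 o h0 ho (fun a ha => ?_)
    obtain ⟨b, hb, hab, hbo⟩ := happ (max γ a) (max_lt hγ ha)
    refine ⟨b, hb.2 γ (lt_of_le_of_lt (le_max_left γ a) hab), lt_of_le_of_lt (le_max_right γ a) hab, hbo⟩

theorem fodor {S : Set Ordinal.{0}} (hS : Stat S) {f : Ordinal.{0} → Ordinal.{0}}
    (hf : ∀ o ∈ S, f o < o) : ∃ γ, Stat {o | o ∈ S ∧ f o = γ} := by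
  by_contra hcon
  push_neg at hcon
  have hC : ∀ γ, ∃ C, Club C ∧ {o | o ∈ S ∧ f o = γ} ∩ C = ∅ := by
    intro γ
    have := hcon γ
    rw [Stat] at this
    push_neg at this
    exact this
  choose Cs hClub hEmpty using hC
  obtain ⟨α, hαS, hαd⟩ := hS _ (club_diagInt hClub)
  have h1 : α ∈ Cs (f α) := hαd.2 (f α) (hf α hαS)
  have h2 : α ∈ {o | o ∈ S ∧ f o = f α} ∩ Cs (f α) := ⟨⟨hαS, rfl⟩, h1⟩
  rw [hEmpty] at h2
  exact h2

end OPLaux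

namespace OPLaux
open Classical Set Ordinal Cardinal

theorem Stat.interClub {S : Set Ordinal.{0}} (hS : Stat S) {C : Set Ordinal.{0}} (hC : Club C) :
    Stat (S ∩ C) := by
  intro C' hC'
  obtain ⟨o, hoS, hoC, hoC'⟩ := hS _ (hC.inter hC')
  exact ⟨o, ⟨hoS, hoC⟩, hoC'⟩

theorem omega0_lt_w1 : (Ordinal.omega0 : Ordinal.{0}) < w1 := by
  rw [← Cardinal.ord_aleph0, w1]
  exact Cardinal.ord_lt_ord.2 Cardinal.aleph0_lt_aleph_one

theorem stat_press {S : Set Ordinal.{0}} (hS : Stat S) {α : Type*} (g : Ordinal.{0} → α)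
    {C : Set α} (hC : C.Countable) (hg : ∀ o ∈ S, g o ∈ C) :
    ∃ c ∈ C, Stat {o | o ∈ S ∧ g o = c} := by
  obtain ⟨o₀, ho₀S, _⟩ := hS.nonempty
  set e : ℕ → α := Set.enumerateCountable hC (g o₀) with he
  have hrange : ∀ o ∈ S, ∃ n, e n = g o := by
    intro o hoS
    obtain ⟨n, hn⟩ := Set.subset_range_enumerate hC (g o₀) (hg o hoS)
    exact ⟨n, hn⟩
  set f : Ordinal.{0} → Ordinal.{0} :=
    fun o => if h : ∃ n, e n = g o then ((Nat.find h : ℕ) : Ordinal) else 0 with hf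
  set S' : Set Ordinal.{0} := S ∩ {b | Ordinal.omega0 < b ∧ b < w1} with hS'
  have hS'stat : Stat S' := hS.interClub (club_Ioi omega0_lt_w1)
  have hreg : ∀ o ∈ S', f o < o := by
    intro o hoS'
    show (if h : ∃ n, e n = g o then ((Nat.find h : ℕ) : Ordinal) else 0) < o
    rw [dif_pos (hrange o hoS'.1)]
    exact lt_trans (Ordinal.nat_lt_omega0 _) hoS'.2.1
  obtain ⟨γ, hγ⟩ := fodor hS'stat hreg
  obtain ⟨o₁, ⟨ho₁, hfo₁⟩, _⟩ := hγ.nonempty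
  have h₁ : ∃ n, e n = g o₁ := hrange o₁ ho₁.1
  set n₀ : ℕ := Nat.find h₁ with hn₀
  refine ⟨e n₀, by rw [Nat.find_spec h₁]; exact hg o₁ ho₁.1, ?_⟩
  refine Stat.mono ?_ hγ
  rintro o ⟨hoS', hfo⟩
  have h₂ : ∃ n, e n = g o := hrange o hoS'.1
  refine ⟨hoS'.1, ?_⟩
  have : ((Nat.find h₂ : ℕ) : Ordinal) = ((n₀ : ℕ) : Ordinal) := by
    have hfo' : (if h : ∃ n, e n = g o then ((Nat.find h : ℕ) : Ordinal) else 0) = γ := hfo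
    have hfo₁' : (if h : ∃ n, e n = g o₁ then ((Nat.find h : ℕ) : Ordinal) else 0) = γ := hfo₁
    rw [dif_pos h₂] at hfo'
    rw [dif_pos h₁] at hfo₁'
    rw [hfo', ← hfo₁', hn₀]
  have hnn : Nat.find h₂ = n₀ := Nat.cast_inj.1 this
  rw [← Nat.find_spec h₂, hnn]

end OPLaux

namespace OPLaux
open Classical Set
open scoped Classical

universe u
variable {D : Type u}

/-- A combinatorial "basic open set" in `(Option D)^ℕ`. -/
structure NB (D : Type u) where
  F : Finset ℕ
  S : ℕ → Set (Option D)
  cocount : ∀ i ∈ F, (none : Option D) ∈ S i → {d : D | some d ∉ S i}.Countable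

def NB.Mem (B : NB D) (x : ℕ → Option D) : Prop := ∀ i ∈ B.F, x i ∈ B.S i

def NB.const (B : NB D) : Set D :=
  {d | ∃ i ∈ B.F, (none : Option D) ∈ B.S i ∧ some d ∉ B.S i}

theorem NB.const_countable (B : NB D) : B.const.Countable := by
  have h : B.const ⊆ ⋃ i ∈ B.F, {d : D | (none : Option D) ∈ B.S i ∧ some d ∉ B.S i} := by
    rintro d ⟨i, hi, h1, h2⟩
    exact Set.mem_biUnion hi ⟨h1, h2⟩
  refine Set.Countable.mono h (Set.Countable.biUnion B.F.countable_toSet (fun i hi => ?_))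
  by_cases hn : (none : Option D) ∈ B.S i
  · exact (B.cocount i hi hn).mono (fun d hd => hd.2)
  · have : {d : D | (none : Option D) ∈ B.S i ∧ some d ∉ B.S i} = ∅ := by
      ext d; simp [hn]
    rw [this]; exact Set.countable_empty

def XE (E : Set D) : Set (ℕ → Option D) := {x | ∀ i d, x i = some d → d ∈ E}

theorem allNone_mem_XE (E : Set D) : (fun _ => (none : Option D)) ∈ XE E := by
  intro i d h; exact absurd h (by simp)

def projE (E : Set D) (x : ℕ → Option D) : ℕ → Option D := fun i =>
  match x i with
  | none => none
  | some d => if d ∈ E then some d else none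

theorem projE_none {E : Set D} {x : ℕ → Option D} {i : ℕ} (h : x i = none) :
    projE E x i = none := by
  unfold projE; rw [h]

theorem projE_some_mem {E : Set D} {x : ℕ → Option D} {i : ℕ} {d : D} (h : x i = some d)
    (hd : d ∈ E) : projE E x i = some d := by
  unfold projE; rw [h]
  show (if d ∈ E then some d else none) = some d
  rw [if_pos hd]

theorem projE_some_not {E : Set D} {x : ℕ → Option D} {i : ℕ} {d : D} (h : x i = some d)
    (hd : d ∉ E) : projE E x i = none := by
  unfold projE; rw [h]
  show (if d ∈ E then some d else none) = none
  rw [if_neg hd]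

theorem projE_mem (E : Set D) (x : ℕ → Option D) : projE E x ∈ XE E := by
  intro i d h
  cases hx : x i with
  | none => rw [projE_none hx] at h; exact absurd h (by simp)
  | some d' =>
    by_cases hd' : d' ∈ E
    · rw [projE_some_mem hx hd'] at h
      rw [← Option.some_inj.1 h]; exact hd'
    · rw [projE_some_not hx hd'] at h
      exact absurd h (by simp)

theorem projE_eq_or (E : Set D) (x : ℕ → Option D) (i : ℕ) :
    projE E x i = x i ∨ (projE E x i = none ∧ ∃ d, x i = some d ∧ d ∉ E) := by
  cases hx : x i with
  | none => left; exact projE_none hx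
  | some d' =>
    by_cases hd' : d' ∈ E
    · left; exact projE_some_mem hx hd'
    · right; exact ⟨projE_some_not hx hd', d', rfl, hd'⟩

theorem NB.transfer {B : NB D} {E : Set D} (hc : B.const ⊆ E) {x : ℕ → Option D}
    (h : B.Mem (projE E x)) : B.Mem x := by
  intro i hi
  have hp := h i hi
  rcases projE_eq_or E x i with heq | ⟨hnone, d, hxd, hdE⟩
  · rw [heq] at hp; exact hp
  · rw [hnone] at hp
    rw [hxd]
    by_contra hnot
    exact hdE (hc ⟨i, hi, hp, hnot⟩)

/-- Cylinder over a finite partial function code. -/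
def Cyl (σ : Finset ℕ × (ℕ → Option D)) : Set (ℕ → Option D) := {y | ∀ i ∈ σ.1, y i = σ.2 i}

def Codes (E : Set D) : Set (Finset ℕ × (ℕ → Option D)) :=
  {σ | (∀ i, i ∉ σ.1 → σ.2 i = none) ∧ ∀ i d, σ.2 i = some d → d ∈ E}

theorem codes_countable {E : Set D} (hE : E.Countable) : (Codes E).Countable := by
  haveI := hE.to_subtype
  set m : (Σ F : Finset ℕ, (F → Option E)) → Finset ℕ × (ℕ → Option D) := fun p =>
    (p.1, fun i => if h : i ∈ p.1 then Option.map Subtype.val (p.2 ⟨i, h⟩) else none) with hm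
  have hsub : Codes E ⊆ Set.range m := by
    rintro σ ⟨hs1, hs2⟩
    refine ⟨⟨σ.1, fun i => if h : ∃ e : E, σ.2 i = some (e : D) then some h.choose else none⟩, ?_⟩
    refine Prod.ext rfl ?_
    funext i
    by_cases hi : i ∈ σ.1
    · simp only [hm, dif_pos hi]
      cases hx : σ.2 i with
      | none =>
        have hne : ¬ ∃ e : E, (none : Option D) = some (e : D) := by
          rintro ⟨e, he⟩; exact absurd he (by simp)
        rw [dif_neg hne]; simp
      | some d =>
        have hex : ∃ e : E, (some d : Option D) = some (e : D) := ⟨⟨d, hs2 i d hx⟩, rfl⟩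
        rw [dif_pos hex]
        have h2 := hex.choose_spec
        rw [Option.map_some]
        exact h2.symm
    · simp only [hm, dif_neg hi]
      exact (hs1 i hi).symm
  exact (Set.countable_range m).mono hsub

theorem countable_reduction {E : Set D} (hE : E.Countable) {ι : Type*} (B : ι → NB D)
    (A : Set ι) (hcov : ∀ x ∈ XE E, ∃ j ∈ A, (B j).Mem x) :
    ∃ T : Set ι, T ⊆ A ∧ T.Countable ∧ ∀ x ∈ XE E, ∃ j ∈ T, (B j).Mem x := by
  obtain ⟨j₀, hj₀A, _⟩ := hcov _ (allNone_mem_XE E)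
  set Good : Finset ℕ × (ℕ → Option D) → Prop :=
    fun σ => ∃ j ∈ A, ∀ y ∈ Cyl σ, (B j).Mem y with hGood
  set pick : Finset ℕ × (ℕ → Option D) → ι :=
    fun σ => if h : Good σ then h.choose else j₀ with hpick
  refine ⟨pick '' {σ | σ ∈ Codes E ∧ Good σ}, ?_, ?_, ?_⟩
  · rintro j ⟨σ, ⟨_, hG⟩, rfl⟩
    simp only [hpick, dif_pos hG]
    exact hG.choose_spec.1
  · exact Set.Countable.image ((codes_countable hE).mono (fun σ h => h.1)) pick
  · intro x hx
    obtain ⟨j, hjA, hjm⟩ := hcov x hx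
    set σx : Finset ℕ × (ℕ → Option D) :=
      ((B j).F, fun i => if i ∈ (B j).F then x i else none) with hσx
    have hcodes : σx ∈ Codes E := by
      constructor
      · intro i hi; exact if_neg hi
      · intro i d hd
        simp only [hσx] at hd
        by_cases hi : i ∈ (B j).F
        · rw [if_pos hi] at hd; exact hx i d hd
        · rw [if_neg hi] at hd; exact absurd hd (by simp)
    have hxcyl : x ∈ Cyl σx := by
      intro i hi; exact (if_pos hi).symm
    have hG : Good σx := by
      refine ⟨j, hjA, fun y hy i hi => ?_⟩
      have := hy i hi
      simp only [hσx, if_pos hi] at this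
      rw [this]
      exact hjm i hi
    refine ⟨pick σx, ⟨σx, ⟨hcodes, hG⟩, rfl⟩, ?_⟩
    simp only [hpick, dif_pos hG]
    exact hG.choose_spec.2 x hxcyl

end OPLaux

namespace OPLaux
open Classical Set Ordinal Cardinal
open scoped Classical

universe u v

/-- Context for the fixed-point argument: a basic cover with no countable
"self-supported" subcover. -/
structure Ctx (D : Type u) (ι : Type v) : Type (max u v) where
  B : ι → NB D
  ne : Nonempty D
  hcov : ∀ x : ℕ → Option D, ∃ j, (B j).Mem x
  hNF : ∀ E : Set D, E.Countable → ∀ T : Set ι, T.Countable →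
    (∀ j ∈ T, (B j).const ⊆ E) → ∃ x ∈ XE E, ∀ j ∈ T, ¬ (B j).Mem x

namespace Ctx

variable {D : Type u} {ι : Type v} (c : Ctx D ι)

/-- A chosen countable subfamily covering `XE E`. -/
def Tsel (E : Set D) : Set ι :=
  if hE : E.Countable then
    (countable_reduction hE c.B Set.univ
      (fun x _ => (c.hcov x).imp (fun j hj => ⟨Set.mem_univ j, hj⟩))).choose
  else ∅

theorem Tsel_spec {E : Set D} (hE : E.Countable) :
    (c.Tsel E).Countable ∧ ∀ x ∈ XE E, ∃ j ∈ c.Tsel E, (c.B j).Mem x := by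
  rw [Tsel, dif_pos hE]
  have h := (countable_reduction hE c.B Set.univ
      (fun x _ => (c.hcov x).imp (fun j hj => ⟨Set.mem_univ j, hj⟩))).choose_spec
  exact ⟨h.2.1, h.2.2⟩

/-- One closure step: add the constants of the chosen cover. -/
def gfun (E : Set D) : Set D := E ∪ ⋃ j ∈ c.Tsel E, (c.B j).const

theorem subset_gfun (E : Set D) : E ⊆ c.gfun E := Set.subset_union_left

theorem const_sub_gfun {E : Set D} {j : ι} (hj : j ∈ c.Tsel E) : (c.B j).const ⊆ c.gfun E :=
  fun d hd => Set.mem_union_right _ (Set.mem_biUnion hj hd)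

theorem gfun_countable {E : Set D} (hE : E.Countable) : (c.gfun E).Countable :=
  hE.union (Set.Countable.biUnion (c.Tsel_spec hE).1 (fun j _ => (c.B j).const_countable))

/-- The transfinite closure chain. -/
def Efun : Ordinal.{0} → Set D :=
  Ordinal.lt_wf.fix (fun o ih => ⋃ o' : Set.Iio o, c.gfun (ih o'.1 o'.2))

theorem Efun_eq (o : Ordinal.{0}) :
    c.Efun o = ⋃ o' : Set.Iio o, c.gfun (c.Efun o'.1) := by
  rw [Efun, WellFounded.fix_eq]

theorem mem_Efun_iff {v : D} {o : Ordinal.{0}} :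
    v ∈ c.Efun o ↔ ∃ o' : Ordinal.{0}, o' < o ∧ v ∈ c.gfun (c.Efun o') := by
  rw [Efun_eq, Set.mem_iUnion]
  constructor
  · rintro ⟨o', ho'⟩; exact ⟨o'.1, o'.2, ho'⟩
  · rintro ⟨o', h1, h2⟩; exact ⟨⟨o', h1⟩, h2⟩

theorem Efun_mono {o1 o2 : Ordinal.{0}} (h : o1 ≤ o2) : c.Efun o1 ⊆ c.Efun o2 := by
  intro v hv
  rw [mem_Efun_iff] at hv ⊢
  obtain ⟨o', h1, h2⟩ := hv
  exact ⟨o', lt_of_lt_of_le h1 h, h2⟩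

theorem gfun_Efun_sub {o' o : Ordinal.{0}} (h : o' < o) : c.gfun (c.Efun o') ⊆ c.Efun o :=
  fun v hv => c.mem_Efun_iff.2 ⟨o', h, hv⟩

theorem Efun_countable {o : Ordinal.{0}} (ho : o < w1) : (c.Efun o).Countable := by
  induction o using Ordinal.lt_wf.induction with
  | _ o ih =>
    rw [Efun_eq]
    haveI := (countable_Iio_w1 ho).to_subtype
    exact Set.countable_iUnion (fun o' => c.gfun_countable (ih o'.1 o'.2 (lt_trans o'.2 ho)))

theorem witness_exists {o : Ordinal.{0}} (ho : o < w1) :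
    ∃ w ∈ XE (c.Efun o), ∀ j, (c.B j).const ⊆ c.Efun o → ¬ (c.B j).Mem w := by
  by_contra hc
  push_neg at hc
  obtain ⟨T, hTA, hTc, hTcov⟩ := countable_reduction (c.Efun_countable ho) c.B
    {j | (c.B j).const ⊆ c.Efun o} (fun x hx => hc x hx)
  obtain ⟨x, hxXE, hxnot⟩ := c.hNF (c.Efun o) (c.Efun_countable ho) T hTc (fun j hj => hTA hj)
  obtain ⟨j, hjT, hjm⟩ := hTcov x hxXE
  exact hxnot j hjT hjm

/-- The chosen witness point at stage `o`. -/
def wsel (o : Ordinal.{0}) : ℕ → Option D :=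
  if ho : o < w1 then (c.witness_exists ho).choose else fun _ => none

theorem wsel_spec {o : Ordinal.{0}} (ho : o < w1) :
    c.wsel o ∈ XE (c.Efun o) ∧ ∀ j, (c.B j).const ⊆ c.Efun o → ¬ (c.B j).Mem (c.wsel o) := by
  rw [wsel, dif_pos ho]
  exact ⟨(c.witness_exists ho).choose_spec.1, (c.witness_exists ho).choose_spec.2⟩

/-- Stage of a constant. -/
def stg (v : D) : Ordinal.{0} := sInf {o | v ∈ c.gfun (c.Efun o)}

theorem stg_spec {v : D} {o : Ordinal.{0}} (hv : v ∈ c.Efun o) :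
    c.stg v < o ∧ v ∈ c.gfun (c.Efun (c.stg v)) := by
  obtain ⟨o', h1, h2⟩ := c.mem_Efun_iff.1 hv
  have hne : {o | v ∈ c.gfun (c.Efun o)}.Nonempty := ⟨o', h2⟩
  exact ⟨lt_of_le_of_lt (csInf_le' h2) h1, csInf_mem hne⟩

theorem stat_Iio : Stat (Set.Iio w1) := by
  intro C hC
  obtain ⟨b, hbC, _⟩ := hC.1 0 w1_pos
  exact ⟨b, hC.2.2 b hbC, hbC⟩

/-- Pressing-down step at coordinate `k`. -/
theorem press_step {S : Set Ordinal.{0}} (hS : Stat S) (hSub : S ⊆ Set.Iio w1) (k : ℕ) :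
    ∃ S' : Set Ordinal.{0}, S' ⊆ S ∧ Stat S' ∧ ∃ vd : Option D,
      (∀ o ∈ S', c.wsel o k = vd) ∧
      (∀ d : D, vd = some d → ∃ o' : Ordinal.{0}, o' < w1 ∧ d ∈ c.gfun (c.Efun o')) := by
  haveI := c.ne
  by_cases h1 : Stat {o | o ∈ S ∧ c.wsel o k = none}
  · refine ⟨_, (fun o ho => ho.1), h1, none, fun o ho => ho.2, ?_⟩
    intro d hd; exact absurd hd (by simp)
  · have h2 : Stat {o | o ∈ S ∧ c.wsel o k ≠ none} := by
      refine Stat.mono ?_ (stat_split hS h1)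
      rintro o ⟨hoS, hno⟩
      exact ⟨hoS, fun hnone => hno ⟨hoS, hnone⟩⟩
    set dval : Ordinal.{0} → D :=
      fun o => if h : ∃ d, c.wsel o k = some d then h.choose else Classical.arbitrary D with hdval
    have hdv : ∀ o ∈ {o | o ∈ S ∧ c.wsel o k ≠ none}, c.wsel o k = some (dval o) := by
      intro o ho
      obtain ⟨d, hd⟩ := Option.ne_none_iff_exists'.1 ho.2
      have hex : ∃ d, c.wsel o k = some d := ⟨d, hd⟩
      simp only [hdval, dif_pos hex]
      exact hex.choose_spec
    have hmemE : ∀ o ∈ {o | o ∈ S ∧ c.wsel o k ≠ none}, dval o ∈ c.Efun o := by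
      intro o ho
      exact (c.wsel_spec (hSub ho.1)).1 k (dval o) (hdv o ho)
    have hreg : ∀ o ∈ {o | o ∈ S ∧ c.wsel o k ≠ none}, c.stg (dval o) < o :=
      fun o ho => (c.stg_spec (hmemE o ho)).1
    obtain ⟨γ, hγ⟩ := fodor h2 hreg
    obtain ⟨o₁, ⟨ho₁, hfo₁⟩, ho₁w1⟩ := hγ.nonempty
    have hγw1 : γ < w1 := hfo₁ ▸ lt_trans (hreg o₁ ho₁) ho₁w1
    have hCctble : (c.gfun (c.Efun γ)).Countable := c.gfun_countable (c.Efun_countable hγw1)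
    have hg : ∀ o ∈ {o | o ∈ {o | o ∈ S ∧ c.wsel o k ≠ none} ∧ c.stg (dval o) = γ},
        dval o ∈ c.gfun (c.Efun γ) := by
      rintro o ⟨ho, hst⟩
      have := (c.stg_spec (hmemE o ho)).2
      rwa [hst] at this
    obtain ⟨dstar, hdstarC, hdstar⟩ := stat_press hγ dval hCctble hg
    refine ⟨_, ?_, hdstar, some dstar, ?_, ?_⟩
    · rintro o ⟨⟨⟨hoS, _⟩, _⟩, _⟩; exact hoS
    · rintro o ⟨⟨ho, _⟩, hdo⟩
      rw [hdv o ho, hdo]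
    · intro d hd
      refine ⟨γ, hγw1, ?_⟩
      have hd' : d = dstar := (Option.some_inj.1 hd).symm
      rw [hd']
      exact hdstarC

end Ctx
end OPLaux


namespace OPLaux
namespace Ctx
open Classical Set
open scoped Classical

universe u v
variable {D : Type u} {ι : Type v} (c : Ctx D ι)

def PP (c : Ctx D ι) (n : ℕ) (p : Set Ordinal.{0} × (ℕ → Option D)) : Prop :=
  Stat p.1 ∧ p.1 ⊆ Set.Iio w1 ∧ (∀ o ∈ p.1, ∀ m ≤ n, c.wsel o m = p.2 m) ∧
  (∀ m ≤ n, ∀ d : D, p.2 m = some d → ∃ o' : Ordinal.{0}, o' < w1 ∧ d ∈ c.gfun (c.Efun o'))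

theorem base_ex : ∃ p, c.PP 0 p := by
  obtain ⟨S', hsub, hstat, vd, hv, hwit⟩ := c.press_step stat_Iio (fun _ h => h) 0
  refine ⟨(S', fun _ => vd), hstat, fun o ho => hsub ho, ?_, ?_⟩
  · intro o ho m hm
    have : m = 0 := Nat.le_zero.1 hm
    subst this
    exact hv o ho
  · intro m hm d hd
    exact hwit d hd

theorem step_ex {n : ℕ} {p : Set Ordinal.{0} × (ℕ → Option D)} (hp : c.PP n p) :
    ∃ q : Set Ordinal.{0} × (ℕ → Option D),
      c.PP (n+1) q ∧ q.1 ⊆ p.1 ∧ ∀ m ≤ n, q.2 m = p.2 m := by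
  obtain ⟨S', hsub, hstat, vd, hv, hwit⟩ := c.press_step hp.1 hp.2.1 (n+1)
  refine ⟨(S', Function.update p.2 (n+1) vd),
    ⟨hstat, fun o ho => hp.2.1 (hsub ho), ?_, ?_⟩, hsub, ?_⟩
  · intro o ho m hm
    by_cases hmn : m = n + 1
    · subst hmn
      show c.wsel o (n+1) = Function.update p.2 (n+1) vd (n+1)
      rw [Function.update_self]
      exact hv o ho
    · have hm' : m ≤ n := Nat.lt_succ_iff.1 (lt_of_le_of_ne hm hmn)
      show c.wsel o m = Function.update p.2 (n+1) vd m
      rw [Function.update_of_ne hmn]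
      exact hp.2.2.1 o (hsub ho) m hm'
  · intro m hm d hd
    have hd' : Function.update p.2 (n+1) vd m = some d := hd
    by_cases hmn : m = n + 1
    · subst hmn
      rw [Function.update_self] at hd'
      exact hwit d hd'
    · have hm' : m ≤ n := Nat.lt_succ_iff.1 (lt_of_le_of_ne hm hmn)
      rw [Function.update_of_ne hmn] at hd'
      exact hp.2.2.2 m hm' d hd' 
  · intro m hm
    exact Function.update_of_ne (by omega) _ _

def chain : (n : ℕ) → {p : Set Ordinal.{0} × (ℕ → Option D) // c.PP n p}
  | 0 => ⟨c.base_ex.choose, c.base_ex.choose_spec⟩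
  | n+1 => ⟨(c.step_ex (chain n).2).choose, (c.step_ex (chain n).2).choose_spec.1⟩

theorem chain_sub (n : ℕ) : (c.chain (n+1)).1.1 ⊆ (c.chain n).1.1 :=
  (c.step_ex (c.chain n).2).choose_spec.2.1

theorem chain_vstep (n : ℕ) {m : ℕ} (hm : m ≤ n) :
    (c.chain (n+1)).1.2 m = (c.chain n).1.2 m :=
  (c.step_ex (c.chain n).2).choose_spec.2.2 m hm

theorem chain_vcoh {n m : ℕ} (hm : m ≤ n) : (c.chain n).1.2 m = (c.chain m).1.2 m := by
  induction n with
  | zero =>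
    have : m = 0 := Nat.le_zero.1 hm
    subst this; rfl
  | succ n ih =>
    by_cases h : m = n + 1
    · subst h; rfl
    · have hm' : m ≤ n := Nat.lt_succ_iff.1 (lt_of_le_of_ne hm h)
      rw [c.chain_vstep n hm', ih hm']

theorem chain_sub' {n m : ℕ} (hm : m ≤ n) : (c.chain n).1.1 ⊆ (c.chain m).1.1 := by
  induction n with
  | zero =>
    have : m = 0 := Nat.le_zero.1 hm
    subst this; exact fun _ h => h
  | succ n ih =>
    by_cases h : m = n + 1
    · subst h; exact fun _ h => h
    · have hm' : m ≤ n := Nat.lt_succ_iff.1 (lt_of_le_of_ne hm h)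
      exact fun o ho => ih hm' (c.chain_sub n ho)

theorem false (c : Ctx D ι) : False := by
  haveI := c.ne
  -- the fused point
  set xs : ℕ → Option D := fun m => (c.chain m).1.2 m with hxs
  have hxswit : ∀ m (d : D), xs m = some d →
      ∃ o' : Ordinal.{0}, o' < w1 ∧ d ∈ c.gfun (c.Efun o') :=
    fun m d hd => (c.chain m).2.2.2.2 m le_rfl d hd
  have hob : ∀ m, ∃ o' : Ordinal.{0}, o' < w1 ∧
      ∀ d : D, xs m = some d → d ∈ c.gfun (c.Efun o') := by
    intro m
    cases hx : xs m with
    | none =>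
      refine ⟨0, w1_pos, fun d hd => ?_⟩
      exact absurd hd (by simp)
    | some d =>
      obtain ⟨o', ho', hmem⟩ := hxswit m d hx
      refine ⟨o', ho', fun d' hd' => ?_⟩
      rw [← Option.some_inj.1 hd']
      exact hmem
  choose ob hoblt hobmem using hob
  set lam : Ordinal.{0} := (⨆ m, ob m) + 1 with hlam
  have hlamw1 : lam < w1 := succ_lt_w1 (iSup_lt_w1 hoblt)
  have hoblam : ∀ m, ob m < lam :=
    fun m => lt_of_le_of_lt (Ordinal.le_iSup ob m) (lt_add_one _)
  have hxsXE : xs ∈ XE (c.Efun lam) := by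
    intro i d hd
    exact c.gfun_Efun_sub (hoblam i) (hobmem i d hd)
  obtain ⟨j, hjT, hjm⟩ := (c.Tsel_spec (c.Efun_countable hlamw1)).2 xs hxsXE
  have hconst : (c.B j).const ⊆ c.Efun (lam + 1) :=
    (c.const_sub_gfun hjT).trans (c.gfun_Efun_sub (lt_add_one lam))
  set ns : ℕ := (c.B j).F.sup id with hns
  have hstat : Stat ((c.chain ns).1.1 ∩ {b | lam + 1 < b ∧ b < w1}) :=
    ((c.chain ns).2.1).interClub (club_Ioi (succ_lt_w1 hlamw1))
  obtain ⟨α, ⟨hαS, hαgt, hαlt⟩, _⟩ := hstat.nonempty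
  have hagree : ∀ i ∈ (c.B j).F, c.wsel α i = xs i := by
    intro i hi
    have hins : i ≤ ns := Finset.le_sup (f := id) hi
    have h1 : c.wsel α i = (c.chain ns).1.2 i := (c.chain ns).2.2.2.1 α hαS i hins
    rw [h1, c.chain_vcoh hins]
  have hmem : (c.B j).Mem (c.wsel α) := by
    intro i hi
    rw [hagree i hi]
    exact hjm i hi
  have hconstα : (c.B j).const ⊆ c.Efun α :=
    hconst.trans (c.Efun_mono (le_of_lt hαgt))
  exact (c.wsel_spec hαlt).2 j hconstα hmem

end Ctx

theorem exists_fixed_point {D : Type u} [hne : Nonempty D] {ι : Type v} (B : ι → NB D)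
    (hcov : ∀ x : ℕ → Option D, ∃ j, (B j).Mem x) :
    ∃ E : Set D, E.Countable ∧ ∃ T : Set ι, T.Countable ∧ (∀ j ∈ T, (B j).const ⊆ E) ∧
      ∀ x ∈ XE E, ∃ j ∈ T, (B j).Mem x := by
  by_contra hcon
  push_neg at hcon
  exact Ctx.false ⟨B, hne, hcov, fun E hE T hT hco => hcon E hE T hT hco⟩

theorem main_comb {D : Type u} [Nonempty D] {ι : Type v} (B : ι → NB D)
    (hcov : ∀ x : ℕ → Option D, ∃ j, (B j).Mem x) :
    ∃ T : Set ι, T.Countable ∧ ∀ x : ℕ → Option D, ∃ j ∈ T, (B j).Mem x := by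
  obtain ⟨E, hE, T, hT, hconst, hcovE⟩ := exists_fixed_point B hcov
  refine ⟨T, hT, fun x => ?_⟩
  obtain ⟨j, hjT, hjm⟩ := hcovE (projE E x) (projE_mem E x)
  exact ⟨j, hjT, NB.transfer (hconst j hjT) hjm⟩

end OPLaux


/-- The countable power of the one-point Lindelöfication of a discrete space is
Lindelöf. -/
theorem onePointLind_pow_lindelof (D : Type*) [Infinite D] :
    LindelofSpace (ℕ → OnePointLind D) := by
  constructor
  apply isLindelof_of_countable_subcover
  intro ι U hUo hsU
  have key : ∀ x : ℕ → OnePointLind D, ∃ (j : ι) (nb : OPLaux.NB D),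
      nb.Mem x ∧ ∀ y : ℕ → Option D, nb.Mem y → y ∈ U j := by
    intro x
    obtain ⟨j, hj⟩ : ∃ j, x ∈ U j := by
      have := hsU (Set.mem_univ x)
      rwa [Set.mem_iUnion] at this
    obtain ⟨I, u, h1, h2⟩ := (isOpen_pi_iff.1 (hUo j)) x hj
    refine ⟨j, ⟨I, u, fun i hi hn => (h1 i hi).1 hn⟩, fun i hi => (h1 i hi).2, ?_⟩
    intro y hy
    exact h2 (fun i hi => hy i hi)
  choose jx nbx hmem hsub using key
  obtain ⟨T, hTc, hTcov⟩ := OPLaux.main_comb nbx (fun x => ⟨x, hmem x⟩)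
  refine ⟨jx '' T, hTc.image jx, fun x _ => ?_⟩
  obtain ⟨p, hpT, hpm⟩ := hTcov x
  exact Set.mem_iUnion₂.2 ⟨jx p, Set.mem_image_of_mem jx hpT, hsub p x hpm⟩
end
end

section
/- Let X₀ and X₁ be almost discrete spaces with non-isolated points x₀ ∈ X₀ and x₁ ∈ X₁, and let Z be the quotient of the disjoint union X₀ ⊔ X₁ identifying x₀ and x₁ to a single point z. Then Z is almost discrete (z is its unique non-isolated point), and the product Z × Z contains a closed subspace homeomorphic to X₀ × X₁. -/
/-!
The summand `X₀` sits in `Z` as a closed subspace: the saturation of a closed `A ⊆ X₀` is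
`inl '' A`, together with `inr x₁` when `x₀ ∈ A`, and `{x₁}` is closed because every other
point of `X₁` is isolated. Symmetrically for `X₁`, and the product of the two closed embeddings
`X₀ → Z`, `X₁ → Z` is a closed embedding `X₀ × X₁ → Z × Z`.
-/

open Topology Function

structure IsWedgeMap {X Y Z : Type*} (π : X ⊕ Y → Z) (x : X) (y : Y) : Prop where
  injective_inl : Injective (π ∘ Sum.inl)
  injective_inr : Injective (π ∘ Sum.inr)
  inl_eq_inr_iff : ∀ a b, π (Sum.inl a) = π (Sum.inr b) ↔ a = x ∧ b = y

theorem isWedgeMap_of_eq_iff {X Y Z : Type*} {π : X ⊕ Y → Z} {x : X} {y : Y}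
    (h : ∀ a b : X ⊕ Y, π a = π b ↔
      (a = b ∨ (a ∈ ({Sum.inl x, Sum.inr y} : Set (X ⊕ Y)) ∧
                b ∈ ({Sum.inl x, Sum.inr y} : Set (X ⊕ Y))))) :
    IsWedgeMap π x y where
  injective_inl a a' haa' := by
    rcases (h _ _).1 haa' with heq | ⟨ha, ha'⟩
    · exact Sum.inl.inj heq
    · simp only [Set.mem_insert_iff, Set.mem_singleton_iff, Sum.inl.injEq, reduceCtorEq,
        or_false] at ha ha'
      rw [ha, ha']
  injective_inr b b' hbb' := by
    rcases (h _ _).1 hbb' with heq | ⟨hb, hb'⟩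
    · exact Sum.inr.inj heq
    · simp only [Set.mem_insert_iff, Set.mem_singleton_iff, Sum.inr.injEq, reduceCtorEq,
        false_or] at hb hb'
      rw [hb, hb']
  inl_eq_inr_iff a b := by simpa using h (.inl a) (.inr b)

theorem isClosed_singleton_of_forall_ne_isOpen {X : Type*} [TopologicalSpace X] {x : X}
    (h : ∀ y, y ≠ x → IsOpen ({y} : Set X)) : IsClosed ({x} : Set X) := by
  rw [← isOpen_compl_iff, ← Set.biUnion_of_singleton {x}ᶜ]
  exact isOpen_biUnion h

namespace IsWedgeMap

variable {X Y Z : Type*} {π : X ⊕ Y → Z} {x : X} {y : Y}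

theorem swap (h : IsWedgeMap π x y) : IsWedgeMap (π ∘ Sum.swap) y x where
  injective_inl := h.injective_inr
  injective_inr := h.injective_inl
  inl_eq_inr_iff b a := by simp [eq_comm, h.inl_eq_inr_iff, and_comm]

theorem inr_eq_inl (h : IsWedgeMap π x y) : π (Sum.inr y) = π (Sum.inl x) :=
  ((h.inl_eq_inr_iff x y).2 ⟨rfl, rfl⟩).symm

theorem preimage_singleton_of_ne (h : IsWedgeMap π x y) {c : X ⊕ Y}
    (hc : π c ≠ π (Sum.inl x)) : π ⁻¹' {π c} = {c} := by
  ext d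
  refine ⟨fun hd => ?_, fun hd => by rw [hd]; rfl⟩
  rcases d with a | b <;> rcases c with a' | b'
  · exact congrArg _ (h.injective_inl hd)
  · obtain ⟨rfl, rfl⟩ := (h.inl_eq_inr_iff a b').1 hd
    exact absurd h.inr_eq_inl hc
  · obtain ⟨rfl, rfl⟩ := (h.inl_eq_inr_iff a' b).1 hd.symm
    exact absurd rfl hc
  · exact congrArg _ (h.injective_inr hd)

variable [TopologicalSpace X] [TopologicalSpace Y] [TopologicalSpace Z]

theorem not_isOpen_singleton (h : IsWedgeMap π x y) (hπ : Continuous π)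
    (hx : ¬ IsOpen ({x} : Set X)) : ¬ IsOpen ({π (Sum.inl x)} : Set Z) := by
  intro hopen
  have hpre : (π ∘ Sum.inl) ⁻¹' {π (Sum.inl x)} = {x} := by
    ext a; exact h.injective_inl.eq_iff
  exact hx (hpre ▸ hopen.preimage (hπ.comp continuous_inl))

theorem isOpen_singleton (h : IsWedgeMap π x y) (hπ : IsQuotientMap π)
    (hX : ∀ a, a ≠ x → IsOpen ({a} : Set X)) (hY : ∀ b, b ≠ y → IsOpen ({b} : Set Y))
    {z : Z} (hz : z ≠ π (Sum.inl x)) : IsOpen ({z} : Set Z) := by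
  obtain ⟨c, rfl⟩ := hπ.surjective z
  rw [← hπ.isOpen_preimage, h.preimage_singleton_of_ne hz]
  rcases c with a | b
  · have ha : a ≠ x := by rintro rfl; exact hz rfl
    simpa using isOpenMap_inl _ (hX a ha)
  · have hb : b ≠ y := by rintro rfl; exact hz h.inr_eq_inl
    simpa using isOpenMap_inr _ (hY b hb)

theorem isClosedEmbedding_inl (h : IsWedgeMap π x y) (hπ : IsQuotientMap π)
    (hy : IsClosed ({y} : Set Y)) : IsClosedEmbedding (π ∘ Sum.inl) := by
  refine .of_continuous_injective_isClosedMap (hπ.continuous.comp continuous_inl)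
    h.injective_inl fun A hA => ?_
  rw [← hπ.isClosed_preimage, isClosed_sum_iff, ← Set.preimage_comp, ← Set.preimage_comp,
    h.injective_inl.preimage_image]
  refine ⟨hA, ?_⟩
  have hpre : (π ∘ Sum.inr) ⁻¹' ((π ∘ Sum.inl) '' A) = {b | x ∈ A ∧ b = y} := by
    ext b
    simp only [Set.mem_preimage, Set.mem_image, comp_apply, h.inl_eq_inr_iff]
    exact ⟨fun ⟨a, ha, hax, hb⟩ => ⟨hax ▸ ha, hb⟩, fun ⟨hx, hb⟩ => ⟨x, hx, rfl, hb⟩⟩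
  change IsClosed ((π ∘ Sum.inr) ⁻¹' ((π ∘ Sum.inl) '' A))
  rw [hpre]
  by_cases hx : x ∈ A <;> simp [hx, hy]

theorem isClosedEmbedding_inr (h : IsWedgeMap π x y) (hπ : IsQuotientMap π)
    (hx : IsClosed ({x} : Set X)) : IsClosedEmbedding (π ∘ Sum.inr) :=
  h.swap.isClosedEmbedding_inl (hπ.comp (Homeomorph.sumComm Y X).isQuotientMap) hx

end IsWedgeMap

theorem wedge_almostDiscrete_and_closed_copy_general {X₀ X₁ Z : Type*}
    [TopologicalSpace X₀] [TopologicalSpace X₁] [TopologicalSpace Z]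
    (x₀ : X₀) (x₁ : X₁)
    (hni₀ : ¬ IsOpen ({x₀} : Set X₀)) (hiso₀ : ∀ x : X₀, x ≠ x₀ → IsOpen ({x} : Set X₀))
    (hiso₁ : ∀ x : X₁, x ≠ x₁ → IsOpen ({x} : Set X₁))
    (π : X₀ ⊕ X₁ → Z) (hq : Topology.IsQuotientMap π)
    (hfib : ∀ a b : X₀ ⊕ X₁, π a = π b ↔
      (a = b ∨ (a ∈ ({Sum.inl x₀, Sum.inr x₁} : Set (X₀ ⊕ X₁)) ∧
                b ∈ ({Sum.inl x₀, Sum.inr x₁} : Set (X₀ ⊕ X₁))))) :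
    (¬ IsOpen ({π (Sum.inl x₀)} : Set Z) ∧
      ∀ z : Z, z ≠ π (Sum.inl x₀) → IsOpen ({z} : Set Z)) ∧
    ∃ e : X₀ × X₁ → Z × Z, Topology.IsClosedEmbedding e := by
  have hπ : IsWedgeMap π x₀ x₁ := isWedgeMap_of_eq_iff hfib
  have he₀ := hπ.isClosedEmbedding_inl hq (isClosed_singleton_of_forall_ne_isOpen hiso₁)
  have he₁ := hπ.isClosedEmbedding_inr hq (isClosed_singleton_of_forall_ne_isOpen hiso₀)
  exact ⟨⟨hπ.not_isOpen_singleton hq.continuous hni₀,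
    fun _ hz => hπ.isOpen_singleton hq hiso₀ hiso₁ hz⟩, _, he₀.prodMap he₁⟩

/-- Let `X₀`, `X₁` be almost discrete spaces with non-isolated points `x₀`, `x₁`,
and let `π : X₀ ⊕ X₁ → Z` be the quotient map identifying exactly `x₀` and `x₁`
to one point. Then `Z` is almost discrete with unique non-isolated point
`π (inl x₀)`, and `Z × Z` contains a closed subspace homeomorphic to `X₀ × X₁`. -/
theorem wedge_almostDiscrete_and_closed_copy {X₀ X₁ Z : Type*}
    [TopologicalSpace X₀] [TopologicalSpace X₁] [TopologicalSpace Z]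
    (x₀ : X₀) (x₁ : X₁)
    (hni₀ : ¬ IsOpen ({x₀} : Set X₀)) (hiso₀ : ∀ x : X₀, x ≠ x₀ → IsOpen ({x} : Set X₀))
    (hni₁ : ¬ IsOpen ({x₁} : Set X₁)) (hiso₁ : ∀ x : X₁, x ≠ x₁ → IsOpen ({x} : Set X₁))
    (π : X₀ ⊕ X₁ → Z) (hq : Topology.IsQuotientMap π)
    (hfib : ∀ a b : X₀ ⊕ X₁, π a = π b ↔
      (a = b ∨ (a ∈ ({Sum.inl x₀, Sum.inr x₁} : Set (X₀ ⊕ X₁)) ∧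
                b ∈ ({Sum.inl x₀, Sum.inr x₁} : Set (X₀ ⊕ X₁))))) :
    (¬ IsOpen ({π (Sum.inl x₀)} : Set Z) ∧
      ∀ z : Z, z ≠ π (Sum.inl x₀) → IsOpen ({z} : Set Z)) ∧
    ∃ e : X₀ × X₁ → Z × Z, Topology.IsClosedEmbedding e :=
  wedge_almostDiscrete_and_closed_copy_general x₀ x₁ hni₀ hiso₀ hiso₁ π hq hfib
end
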